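/- arXiv:2504.03126 — 2 statements merged into one kernel-verified Lean document; each statement's English description precedes it below -/
import Mathlib

section
/- Suppose a stochastic process ζ_k and functions V_k satisfy κ₁‖ζ_k‖² ≤ V_k(ζ_k) ≤ κ₂‖ζ_k‖² with κ₁, κ₂ > 0, and E[V_k(ζ_k) | ζ_{k-1}] - V_{k-1}(ζ_{k-1}) ≤ μ - σ V_{k-1}(ζ_{k-1}) for constants μ ≥ 0 and 0 < σ ≤ 1. Then E[‖ζ_k‖²] ≤ (κ₂/κ₁) E[‖ζ_0‖²] (1-σ)^k + (μ/κ₁) Σ_{i=0}^{k-1} (1-σ)^i, so the process is exponentially bounded in mean square. -/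
open MeasureTheory Filter

/-!
Taking expectations in the drift condition (the tower property removes the conditioning) gives
the scalar recursion `w (k+1) ≤ (1 - σ) w k + μ` for `w k = E[V_k(ζ_k)]`. Unrolling it bounds
`w k` by `w 0 (1 - σ)^k + μ Σ_{i<k} (1 - σ)^i`, and the sandwich `κ₁‖ζ‖² ≤ V ≤ κ₂‖ζ‖²` converts
this into the bound on the second moments.
-/

theorem le_pow_mul_add_geom_sum {w : ℕ → ℝ} {a b : ℝ} (ha : 0 ≤ a)
    (hw : ∀ j, w (j + 1) ≤ a * w j + b) (k : ℕ) :
    w k ≤ w 0 * a ^ k + b * ∑ i ∈ Finset.range k, a ^ i := by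
  induction k with
  | zero => simp
  | succ j ih =>
    calc w (j + 1) ≤ a * w j + b := hw j
      _ ≤ a * (w 0 * a ^ j + b * ∑ i ∈ Finset.range j, a ^ i) + b := by gcongr
      _ = w 0 * a ^ (j + 1) + b * ∑ i ∈ Finset.range (j + 1), a ^ i := by
        rw [geom_sum_succ]; ring

section Drift

variable {Ω : Type*} {m mΩ : MeasurableSpace Ω} {P : Measure Ω}

theorem integral_le_of_condExp_ae_le [IsFiniteMeasure P] (hm : m ≤ mΩ) {X Z : Ω → ℝ}
    (hZ : Integrable Z P) (h : P[X | m] ≤ᵐ[P] Z) : ∫ ω, X ω ∂P ≤ ∫ ω, Z ω ∂P := by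
  rw [← integral_condExp hm]
  exact integral_mono_ae integrable_condExp hZ h

theorem integral_le_of_condExp_sub_le [IsProbabilityMeasure P] (hm : m ≤ mΩ) {X Y : Ω → ℝ}
    (hY : Integrable Y P) {c σ : ℝ} (h : P[X | m] - Y ≤ᵐ[P] fun ω => c - σ * Y ω) :
    ∫ ω, X ω ∂P ≤ (1 - σ) * ∫ ω, Y ω ∂P + c := by
  have hle : P[X | m] ≤ᵐ[P] fun ω => (1 - σ) * Y ω + c := h.mono fun ω hω => by
    simp only [Pi.sub_apply] at hω
    linarith
  calc ∫ ω, X ω ∂P ≤ ∫ ω, (1 - σ) * Y ω + c ∂P :=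
        integral_le_of_condExp_ae_le hm ((hY.const_mul _).add (integrable_const c)) hle
    _ = (1 - σ) * ∫ ω, Y ω ∂P + c := by
        rw [integral_add (hY.const_mul _) (integrable_const c), integral_const_mul,
          integral_const, probReal_univ, one_smul]

end Drift

theorem stochastic_process_exponentially_bounded_general
    {Ω : Type*} {mΩ : MeasurableSpace Ω} (P : Measure Ω) [IsProbabilityMeasure P]
    {n : ℕ} (ζ : ℕ → Ω → EuclideanSpace ℝ (Fin n))
    (V : ℕ → EuclideanSpace ℝ (Fin n) → ℝ)
    (hζmeas : ∀ k, Measurable (ζ k))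
    (hint : ∀ k, Integrable (fun ω => ‖ζ k ω‖ ^ 2) P)
    (hVint : ∀ k, Integrable (fun ω => V k (ζ k ω)) P)
    (κ₁ κ₂ μc σ : ℝ) (hκ₁ : 0 < κ₁)
    (hσ1 : σ ≤ 1)
    (hlow : ∀ k ω, κ₁ * ‖ζ k ω‖ ^ 2 ≤ V k (ζ k ω))
    (hup : ∀ k ω, V k (ζ k ω) ≤ κ₂ * ‖ζ k ω‖ ^ 2)
    (hdrift : ∀ k : ℕ, 1 ≤ k →
      (P[(fun ω => V k (ζ k ω)) | MeasurableSpace.comap (ζ (k-1)) inferInstance])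
        - (fun ω => V (k-1) (ζ (k-1) ω))
        ≤ᵐ[P] fun ω => μc - σ * V (k-1) (ζ (k-1) ω)) :
    ∀ k : ℕ, ∫ ω, ‖ζ k ω‖ ^ 2 ∂P ≤
      (κ₂ / κ₁) * (∫ ω, ‖ζ 0 ω‖ ^ 2 ∂P) * (1 - σ) ^ k
        + (μc / κ₁) * ∑ i ∈ Finset.range k, (1 - σ) ^ i := by
  intro k
  have hrec : ∀ j, ∫ ω, V (j + 1) (ζ (j + 1) ω) ∂P ≤ (1 - σ) * ∫ ω, V j (ζ j ω) ∂P + μc :=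
    fun j => integral_le_of_condExp_sub_le (hζmeas j).comap_le (hVint j)
      (hdrift (j + 1) j.succ_pos)
  have hlow_k : κ₁ * ∫ ω, ‖ζ k ω‖ ^ 2 ∂P ≤ ∫ ω, V k (ζ k ω) ∂P := by
    rw [← integral_const_mul]
    exact integral_mono ((hint k).const_mul κ₁) (hVint k) (hlow k)
  have hup_0 : ∫ ω, V 0 (ζ 0 ω) ∂P ≤ κ₂ * ∫ ω, ‖ζ 0 ω‖ ^ 2 ∂P := by
    rw [← integral_const_mul]
    exact integral_mono (hVint 0) ((hint 0).const_mul κ₂) (hup 0)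
  have hσ' : 0 ≤ 1 - σ := sub_nonneg.mpr hσ1
  have hunrolled := le_pow_mul_add_geom_sum (w := fun j => ∫ ω, V j (ζ j ω) ∂P) hσ' hrec k
  have hpow : 0 ≤ (1 - σ) ^ k := pow_nonneg hσ' k
  rw [div_mul_eq_mul_div, div_mul_eq_mul_div, div_mul_eq_mul_div, ← add_div, le_div_iff₀ hκ₁]
  nlinarith

/-- Lemma (stochastic stability, from the paper): if `κ₁‖ζ_k‖² ≤ V_k(ζ_k) ≤ κ₂‖ζ_k‖²`
and `E[V_k(ζ_k) | ζ_{k-1}] - V_{k-1}(ζ_{k-1}) ≤ μ - σ V_{k-1}(ζ_{k-1})`, then the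
process is exponentially bounded in mean square:
`E‖ζ_k‖² ≤ (κ₂/κ₁) E‖ζ_0‖² (1-σ)^k + (μ/κ₁) Σ_{i<k} (1-σ)^i`. -/
theorem stochastic_process_exponentially_bounded
    {Ω : Type*} {mΩ : MeasurableSpace Ω} (P : Measure Ω) [IsProbabilityMeasure P]
    {n : ℕ} (ζ : ℕ → Ω → EuclideanSpace ℝ (Fin n))
    (V : ℕ → EuclideanSpace ℝ (Fin n) → ℝ)
    (hζmeas : ∀ k, Measurable (ζ k))
    (hVmeas : ∀ k, Measurable (V k))
    (hint : ∀ k, Integrable (fun ω => ‖ζ k ω‖ ^ 2) P)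
    (hVint : ∀ k, Integrable (fun ω => V k (ζ k ω)) P)
    (κ₁ κ₂ μc σ : ℝ) (hκ₁ : 0 < κ₁) (hκ₂ : 0 < κ₂)
    (hμ : 0 ≤ μc) (hσ0 : 0 < σ) (hσ1 : σ ≤ 1)
    (hlow : ∀ k ω, κ₁ * ‖ζ k ω‖ ^ 2 ≤ V k (ζ k ω))
    (hup : ∀ k ω, V k (ζ k ω) ≤ κ₂ * ‖ζ k ω‖ ^ 2)
    (hdrift : ∀ k : ℕ, 1 ≤ k →
      (P[(fun ω => V k (ζ k ω)) | MeasurableSpace.comap (ζ (k-1)) inferInstance])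
        - (fun ω => V (k-1) (ζ (k-1) ω))
        ≤ᵐ[P] fun ω => μc - σ * V (k-1) (ζ (k-1) ω)) :
    ∀ k : ℕ, ∫ ω, ‖ζ k ω‖ ^ 2 ∂P ≤
      (κ₂ / κ₁) * (∫ ω, ‖ζ 0 ω‖ ^ 2 ∂P) * (1 - σ) ^ k
        + (μc / κ₁) * ∑ i ∈ Finset.range k, (1 - σ) ^ i :=
  stochastic_process_exponentially_bounded_general (mΩ := mΩ) P ζ V hζmeas hint hVint κ₁ κ₂ μc σ hκ₁
    hσ1 hlow hup hdrift
end

section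
/- Let Π ≥ 0 be symmetric PSD, R > 0 symmetric PD, and define for each gain L the cost map f(L) = (A - B L)ᵀ Π (A - B L) + Lᵀ R L. Then for any fixed vector ξ, the function L ↦ ξᵀ f(L) ξ is minimized at L* = (R + Bᵀ Π B)⁻¹ Bᵀ Π A, i.e., ξᵀ f(L*) ξ ≤ ξᵀ f(L) ξ for all gains L. -/
/-!
Writing `S = R + Bᵀ Π B`, the cost is `f(L) = AᵀΠA - AᵀΠBL - LᵀBᵀΠA + LᵀSL`, a matrix quadratic in `L`.
Since `S L* = BᵀΠA` and `S` is symmetric, completing the square gives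
`f(L) = f(L*) + (L - L*)ᵀ S (L - L*)`, and the last term is positive semidefinite because
`S ≥ R > 0`.
-/

open Matrix

def lqrCost {ι κ 𝕜 : Type*} [Fintype ι] [Fintype κ] [CommRing 𝕜]
    (A : Matrix ι ι 𝕜) (B : Matrix ι κ 𝕜) (Pi : Matrix ι ι 𝕜) (R : Matrix κ κ 𝕜)
    (L : Matrix κ ι 𝕜) : Matrix ι ι 𝕜 :=
  (A - B * L)ᵀ * Pi * (A - B * L) + Lᵀ * R * L

section CompletionOfSquares

variable {ι κ 𝕜 : Type*} [Fintype ι] [Fintype κ] [CommRing 𝕜]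
  (A : Matrix ι ι 𝕜) (B : Matrix ι κ 𝕜) (Pi : Matrix ι ι 𝕜) (R : Matrix κ κ 𝕜)

theorem lqrCost_eq (L : Matrix κ ι 𝕜) :
    lqrCost A B Pi R L
      = Aᵀ * Pi * A - Aᵀ * Pi * B * L - Lᵀ * (Bᵀ * Pi * A) + Lᵀ * (R + Bᵀ * Pi * B) * L := by
  simp only [lqrCost, transpose_sub, transpose_mul, Matrix.sub_mul, Matrix.mul_sub,
    Matrix.add_mul, Matrix.mul_add, Matrix.mul_assoc]
  abel

theorem lqrCost_eq_lqrCost_add {K : Matrix κ ι 𝕜} (hPi : Pi.IsSymm) (hR : R.IsSymm)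
    (hK : (R + Bᵀ * Pi * B) * K = Bᵀ * Pi * A) (L : Matrix κ ι 𝕜) :
    lqrCost A B Pi R L
      = lqrCost A B Pi R K + (L - K)ᵀ * (R + Bᵀ * Pi * B) * (L - K) := by
  rw [lqrCost_eq, lqrCost_eq]
  set S := R + Bᵀ * Pi * B
  have hKt : Kᵀ * S = Aᵀ * Pi * B := by
    have hS : Sᵀ = S := by simp [S, hPi.eq, hR.eq, Matrix.mul_assoc]
    simpa [hS, hPi.eq, Matrix.mul_assoc] using congrArg transpose hK
  have hKG : Kᵀ * (Bᵀ * Pi * A) = Aᵀ * Pi * B * K := by rw [← hK, ← Matrix.mul_assoc, hKt]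
  simp only [transpose_sub, Matrix.sub_mul, Matrix.mul_sub]
  rw [Matrix.mul_assoc Lᵀ S K, hK, hKt, hKG]
  abel

end CompletionOfSquares

/-- Completion of squares: with `Π` symmetric PSD and `R` symmetric PD, the map
`L ↦ ξᵀ [(A - B L)ᵀ Π (A - B L) + Lᵀ R L] ξ` is minimized at
`L* = (R + Bᵀ Π B)⁻¹ Bᵀ Π A`. -/
theorem lqr_gain_minimizes_quadratic_cost
    {n m : ℕ} (A : Matrix (Fin n) (Fin n) ℝ) (B : Matrix (Fin n) (Fin m) ℝ)
    (Pi : Matrix (Fin n) (Fin n) ℝ) (R : Matrix (Fin m) (Fin m) ℝ)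
    (hPi : Pi.PosSemidef) (hR : R.PosDef) (ξ : Fin n → ℝ) :
    ∀ L : Matrix (Fin m) (Fin n) ℝ,
      letI Lstar := (R + Bᵀ * Pi * B)⁻¹ * (Bᵀ * Pi * A)
      ξ ⬝ᵥ ((A - B * Lstar)ᵀ * Pi * (A - B * Lstar) + Lstarᵀ * R * Lstar).mulVec ξ
        ≤ ξ ⬝ᵥ ((A - B * L)ᵀ * Pi * (A - B * L) + Lᵀ * R * L).mulVec ξ := by
  intro L
  set Lstar := (R + Bᵀ * Pi * B)⁻¹ * (Bᵀ * Pi * A)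
  have hS : (R + Bᵀ * Pi * B).PosDef := by
    simpa using hR.add_posSemidef (hPi.conjTranspose_mul_mul_same B)
  have hLstar : (R + Bᵀ * Pi * B) * Lstar = Bᵀ * Pi * A :=
    mul_nonsing_inv_cancel_left _ _ ((isUnit_iff_isUnit_det _).1 hS.isUnit)
  have hgap : ((L - Lstar)ᵀ * (R + Bᵀ * Pi * B) * (L - Lstar)).PosSemidef := by
    simpa using hS.posSemidef.conjTranspose_mul_mul_same (L - Lstar)
  change ξ ⬝ᵥ lqrCost A B Pi R Lstar *ᵥ ξ ≤ ξ ⬝ᵥ lqrCost A B Pi R L *ᵥ ξ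
  rw [lqrCost_eq_lqrCost_add A B Pi R (isHermitian_iff_isSymm.1 hPi.isHermitian)
    (isHermitian_iff_isSymm.1 hR.isHermitian) hLstar L, add_mulVec, dotProduct_add]
  exact le_add_of_nonneg_right (hgap.dotProduct_mulVec_nonneg ξ)
end
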